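/- arXiv:math/0409194 — 3 statements merged into one kernel-verified Lean document; each statement's English description precedes it below -/
import Mathlib

section
/- Saturation of the cascade sets for low-mode forcing (Lemma 16.2, first bullet, 𝒵 version): Suppose 𝒵₀ ⊆ ℤ²_* and either {(0,1),(1,1)} ⊆ 𝒵₀ or {(1,0),(1,1)} ⊆ 𝒵₀. Then 𝒵_∞ = ℤ²_*; that is, every k ∈ ℤ² with k₂ ≥ 0 and k ≠ 0 belongs to 𝒵ₙ for some n. -/
/-- The set `ℤ²_* = {k ∈ ℤ² : k₂ ≥ 0, k ≠ 0}`. -/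
def Zstar : Set (ℤ × ℤ) := {k | 0 ≤ k.2 ∧ k ≠ 0}

/-- `ℓ^⊥ · j` where `ℓ^⊥ = (-ℓ₂, ℓ₁)`. -/
def perpDot (l j : ℤ × ℤ) : ℤ := -l.2 * j.1 + l.1 * j.2

/-- The squared Euclidean norm `|k|² = k₁² + k₂²`. -/
def normSq (k : ℤ × ℤ) : ℤ := k.1 ^ 2 + k.2 ^ 2

/-- The cascade sets `𝒵ₙ`: `𝒵₀ = Z0` and
`𝒵ₙ = 𝒵ₙ₋₁ ∪ {k ∈ ℤ²_* : k ∈ {ℓ+j, ℓ-j, j-ℓ}, j ∈ 𝒵₀, ℓ ∈ 𝒵ₙ₋₁,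
  ℓ^⊥·j ≠ 0, |j| ≠ |ℓ|}`. -/
def Zcascade (Z0 : Set (ℤ × ℤ)) : ℕ → Set (ℤ × ℤ)
  | 0 => Z0
  | n + 1 =>
      Zcascade Z0 n ∪
        {k | k ∈ Zstar ∧ ∃ j ∈ Z0, ∃ l ∈ Zcascade Z0 n,
          (k = l + j ∨ k = l - j ∨ k = j - l) ∧
          perpDot l j ≠ 0 ∧ normSq j ≠ normSq l}

/-!
Write `𝒵_∞` for the union of the cascade. If `(0,1) ∈ 𝒵₀`, the steps `±(0,1)` are admissible at
every `(c, b)` with `c ≠ 0` and `|(c, b)| > 1`, so one point with `b ≥ 1` fills the whole column `c`;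
steps by `±(1,1)` away from the diagonal carry such points from column to column, starting at
`(1,1)`. If `(1,0) ∈ 𝒵₀`, the steps `±(1,0)` fill every row `b ≥ 2` from one point, steps by
`(1,1)` put `(b + 1, b)` into every row, and the rows `b = 1, 0` are reached from the row above
by subtracting `(1,1)` or subtracting from it.
-/

def Zinfty (Z0 : Set (ℤ × ℤ)) : Set (ℤ × ℤ) := ⋃ n, Zcascade Z0 n

@[simp]
lemma mk_mem_Zstar {a b : ℤ} : (a, b) ∈ Zstar ↔ 0 ≤ b ∧ (a ≠ 0 ∨ b ≠ 0) := by
  simp only [Zstar, Set.mem_ofPred_eq, Ne, Prod.ext_iff, Prod.fst_zero, Prod.snd_zero, not_and_or]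

namespace Zinfty

variable {Z0 : Set (ℤ × ℤ)}

lemma subset_Zstar (hZ0 : Z0 ⊆ Zstar) : Zinfty Z0 ⊆ Zstar := by
  refine Set.iUnion_subset fun n => ?_
  induction n with
  | zero => exact hZ0
  | succ n ih => exact Set.union_subset ih fun _ hk => hk.1

lemma subset_self : Z0 ⊆ Zinfty Z0 := Set.subset_iUnion (Zcascade Z0) 0

lemma mem_of_step {j l k : ℤ × ℤ} (hj : j ∈ Z0) (hl : l ∈ Zinfty Z0) (hk : k ∈ Zstar)
    (hkl : k = l + j ∨ k = l - j ∨ k = j - l) (hperp : perpDot l j ≠ 0)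
    (hnorm : normSq j ≠ normSq l) : k ∈ Zinfty Z0 := by
  obtain ⟨n, hn⟩ := Set.mem_iUnion.1 hl
  exact Set.mem_iUnion.2 ⟨n + 1, Or.inr ⟨hk, j, hj, l, hn, hkl, hperp, hnorm⟩⟩

section Vertical

variable (h01 : ((0 : ℤ), (1 : ℤ)) ∈ Z0)
include h01

lemma mem_column {c b₀ : ℤ} (hc : c ≠ 0) (hb₀ : 1 ≤ b₀) (h : (c, b₀) ∈ Zinfty Z0)
    {b : ℤ} (hb : 0 ≤ b) : (c, b) ∈ Zinfty Z0 := by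
  have hc2 : 0 < c ^ 2 := by positivity
  rcases le_total b₀ b with hle | hle
  · induction b, hle using Int.leInduction with
    | base => exact h
    | succ b hb₀b ih =>
      refine mem_of_step h01 (ih (by omega)) (by simp; omega) (.inl (by simp)) ?_ ?_
      · simpa [perpDot] using hc
      · simp only [normSq]; nlinarith
  · induction b, hle using Int.leInductionDown with
    | base => exact h
    | pred b hbb₀ ih =>
      refine mem_of_step h01 (ih (by omega)) (by simp; omega) (.inr (.inl (by simp))) ?_ ?_
      · simpa [perpDot] using hc
      · simp only [normSq]; nlinarith

variable (h11 : ((1 : ℤ), (1 : ℤ)) ∈ Z0)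
include h11

lemma mem_of_one_le_fst {c b : ℤ} (hc : 1 ≤ c) (hb : 0 ≤ b) : (c, b) ∈ Zinfty Z0 := by
  induction c, hc using Int.leInduction generalizing b with
  | base => exact mem_column h01 one_ne_zero le_rfl (subset_self h11) hb
  | succ c hc ih =>
    refine mem_column h01 (by omega) (b₀ := c + 2) (by omega) ?_ hb
    refine mem_of_step h11 (ih (b := c + 1) (by omega)) (by simp; omega) (.inl (by simp; ring))
      (by simp [perpDot]) ?_
    simp only [normSq]; nlinarith

lemma mem_of_fst_le_one {c m : ℤ} (hc : c ≤ 1) (hm : 1 ≤ m) : (c, m) ∈ Zinfty Z0 := by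
  induction c, hc using Int.leInductionDown generalizing m with
  | base => exact mem_of_one_le_fst h01 h11 le_rfl (by omega)
  | pred c hc ih =>
    refine mem_of_step h11 (ih (m := m + 1) (by omega)) (by simp; omega) (.inr (.inl (by simp)))
      (by simp [perpDot]; omega) ?_
    simp only [normSq]; nlinarith

theorem Zstar_subset_of_mem_zero_one : Zstar ⊆ Zinfty Z0 := by
  rintro ⟨a, b⟩ hk
  rw [mk_mem_Zstar] at hk
  obtain ha | ha := le_or_gt 1 a
  · exact mem_of_one_le_fst h01 h11 ha hk.1
  obtain hb | hb := le_or_gt 1 b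
  · exact mem_of_fst_le_one h01 h11 ha.le hb
  · exact mem_column h01 (by omega) le_rfl (mem_of_fst_le_one h01 h11 ha.le le_rfl) hk.1

end Vertical

section Horizontal

variable (h10 : ((1 : ℤ), (0 : ℤ)) ∈ Z0)
include h10

lemma mem_row {a₀ b : ℤ} (hb : 2 ≤ b) (h : (a₀, b) ∈ Zinfty Z0) (a : ℤ) : (a, b) ∈ Zinfty Z0 := by
  refine Int.inductionOn' a a₀ h (fun a _ ih => ?_) (fun a _ ih => ?_)
  · refine mem_of_step h10 ih (by simp; omega) (.inl (by simp)) (by simp [perpDot]; omega) ?_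
    simp only [normSq]; nlinarith
  · refine mem_of_step h10 ih (by simp; omega) (.inr (.inl (by simp))) (by simp [perpDot]; omega) ?_
    simp only [normSq]; nlinarith

variable (h11 : ((1 : ℤ), (1 : ℤ)) ∈ Z0)
include h11

lemma mem_of_two_le_snd {b : ℤ} (hb : 2 ≤ b) (a : ℤ) : (a, b) ∈ Zinfty Z0 := by
  have hdiag : ∀ b, 1 ≤ b → (b + 1, b) ∈ Zinfty Z0 := by
    intro b hb
    induction b, hb using Int.leInduction with
    | base =>
      exact mem_of_step h10 (subset_self h11) (by simp) (.inl (by norm_num))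
        (by simp [perpDot]) (by simp [normSq])
    | succ b hb ih =>
      refine mem_of_step h11 ih (by simp; omega) (.inl (by simp)) (by simp [perpDot]) ?_
      simp only [normSq]; nlinarith
  exact mem_row h10 hb (hdiag b (by omega)) a

lemma mem_row_one (a : ℤ) : (a, 1) ∈ Zinfty Z0 := by
  obtain rfl | ha := eq_or_ne a 1
  · exact subset_self h11
  refine mem_of_step h11 (mem_of_two_le_snd h10 h11 le_rfl (a + 1)) (by simp)
    (.inr (.inl (by norm_num))) (by simp [perpDot]; omega) ?_
  simp only [normSq]; nlinarith

lemma mem_row_zero {a : ℤ} (ha : a ≠ 0) : (a, 0) ∈ Zinfty Z0 := by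
  obtain ha | ha := ha.lt_or_gt
  -- `(a + 1, 1) - (1, 1)` is blocked at `a = -2`, where `|(-1, 1)| = |(1, 1)|`
  · refine mem_of_step h11 (mem_row_one h10 h11 (1 - a)) (by simp; omega)
      (.inr (.inr (by norm_num))) (by simp [perpDot]; omega) ?_
    simp only [normSq]; nlinarith
  · refine mem_of_step h11 (mem_row_one h10 h11 (a + 1)) (by simp; omega)
      (.inr (.inl (by norm_num))) (by simp [perpDot]; omega) ?_
    simp only [normSq]; nlinarith

theorem Zstar_subset_of_mem_one_zero : Zstar ⊆ Zinfty Z0 := by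
  rintro ⟨a, b⟩ hk
  rw [mk_mem_Zstar] at hk
  obtain hb | rfl | rfl : 2 ≤ b ∨ b = 1 ∨ b = 0 := by omega
  · exact mem_of_two_le_snd h10 h11 hb a
  · exact mem_row_one h10 h11 a
  · exact mem_row_zero h10 h11 (by simpa using hk.2)

end Horizontal

end Zinfty

/-- Saturation of the cascade sets for low-mode forcing (Lemma 16.2, first
bullet, `𝒵` version): if `{(0,1),(1,1)} ⊆ 𝒵₀` or `{(1,0),(1,1)} ⊆ 𝒵₀` then
`𝒵_∞ = ℤ²_*`. -/
theorem cascade_saturates_lowModes (Z0 : Set (ℤ × ℤ)) (hZ0 : Z0 ⊆ Zstar)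
    (hforce :
      ({((0:ℤ), (1:ℤ)), ((1:ℤ), (1:ℤ))} : Set (ℤ × ℤ)) ⊆ Z0 ∨
      ({((1:ℤ), (0:ℤ)), ((1:ℤ), (1:ℤ))} : Set (ℤ × ℤ)) ⊆ Z0) :
    (⋃ n, Zcascade Z0 n) = Zstar := by
  refine (Zinfty.subset_Zstar hZ0).antisymm ?_
  rcases hforce with h | h <;> rw [Set.pair_subset_iff] at h
  · exact Zinfty.Zstar_subset_of_mem_zero_one h.1 h.2
  · exact Zinfty.Zstar_subset_of_mem_one_zero h.1 h.2
end

section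
/- Backward Gronwall estimate with logarithmic envelope (the quantitative core of Lemma 11.1, part 2): Let T < 0, let a : [T,0] → [0,∞) be integrable with ∫ₜ⁰ a(s) ds ≤ C₁|t| + n(1 + log(1+|t|)) for all t ∈ [T,0], and let ρ : [T,0] → [0,∞) be absolutely continuous with ρ′(t) ≤ (−c₁ + c·a(t)) ρ(t) for almost every t ∈ [T,0]. Then ρ(0) ≤ ρ(T) · e^{cn} · (1+|T|)^{cn} · e^{−(c₁ − cC₁)|T|}. -/
/-!
With `k = -c₁ + c·a`, the product of `ρ` with the integrating factor `exp (-∫_T^t k)` is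
absolutely continuous with a.e. nonpositive derivative, whence `ρ 0 ≤ ρ T · exp (∫_T^0 k)`.
The logarithmic envelope bounds the exponent by `cn + cn·log (1 + |T|) - (c₁ - cC₁)|T|`.
-/

open MeasureTheory Set Filter

theorem LipschitzOnWith.comp_absolutelyContinuousOnInterval {X Y : Type*} [PseudoMetricSpace X]
    [PseudoMetricSpace Y] {φ : X → Y} {f : ℝ → X} {K : NNReal} {s : Set X} {a b : ℝ}
    (hφ : LipschitzOnWith K φ s) (hf : AbsolutelyContinuousOnInterval f a b)
    (hfs : MapsTo f (uIcc a b) s) : AbsolutelyContinuousOnInterval (φ ∘ f) a b := by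
  unfold AbsolutelyContinuousOnInterval at hf ⊢
  refine squeeze_zero' (Eventually.of_forall fun _ => Finset.sum_nonneg fun _ _ => dist_nonneg)
    ?_ (by simpa using hf.const_mul (K : ℝ))
  filter_upwards [mem_inf_of_right (mem_principal_self _)] with E hE
  rw [Finset.mul_sum]
  gcongr with i hi
  exact hφ.dist_le_mul _ (hfs (hE.1 i hi).1) _ (hfs (hE.1 i hi).2)

theorem LocallyLipschitz.comp_absolutelyContinuousOnInterval {X Y : Type*}
    [SeminormedAddCommGroup X] [PseudoMetricSpace Y] {φ : X → Y} {f : ℝ → X} {a b : ℝ}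
    (hφ : LocallyLipschitz φ) (hf : AbsolutelyContinuousOnInterval f a b) :
    AbsolutelyContinuousOnInterval (φ ∘ f) a b := by
  have hcpt : IsCompact (f '' uIcc a b) := isCompact_uIcc.image_of_continuousOn hf.continuousOn
  obtain ⟨K, hK⟩ := hφ.locallyLipschitzOn.exists_lipschitzOnWith_of_compact hcpt
  exact hK.comp_absolutelyContinuousOnInterval hf (mapsTo_image f _)

theorem le_mul_exp_integral_of_eq_add_integral {a b : ℝ} (hab : a ≤ b) {k g ρ : ℝ → ℝ}
    (hk : IntervalIntegrable k volume a b) (hg : IntervalIntegrable g volume a b)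
    (hρ : ∀ t ∈ Icc a b, ρ t = ρ a + ∫ s in a..t, g s)
    (hgk : ∀ᵐ s, s ∈ Icc a b → g s ≤ k s * ρ s) :
    ρ b ≤ ρ a * Real.exp (∫ s in a..b, k s) := by
  set R : ℝ → ℝ := fun t => ρ a + ∫ s in a..t, g s
  set Φ : ℝ → ℝ := fun t => Real.exp (-∫ s in a..t, k s)
  have hR : AbsolutelyContinuousOnInterval R a b :=
    (LipschitzWith.const (ρ a)).lipschitzOnWith.absolutelyContinuousOnInterval.add
      (hg.absolutelyContinuousOnInterval_intervalIntegral left_mem_uIcc)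
  have hΦ : AbsolutelyContinuousOnInterval Φ a b :=
    Real.contDiff_exp.locallyLipschitz.comp_absolutelyContinuousOnInterval
      (hk.absolutelyContinuousOnInterval_intervalIntegral left_mem_uIcc).neg
  have hRρ : ∀ t ∈ Icc a b, R t = ρ t := fun t ht => (hρ t ht).symm
  have hderiv : ∀ᵐ s, s ∈ uIoc a b →
      deriv R s * Φ s + R s * deriv Φ s = (g s - k s * ρ s) * Φ s := by
    filter_upwards [hg.ae_hasDerivAt_integral, hk.ae_hasDerivAt_integral] with s hgs hks hs
    have hs' : s ∈ uIcc a b := uIoc_subset_uIcc hs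
    have hR' : HasDerivAt R (g s) s := (hgs hs' a left_mem_uIcc).const_add (ρ a)
    have hΦ' : HasDerivAt Φ (Φ s * -k s) s := (hks hs' a left_mem_uIcc).neg.exp
    rw [hR'.deriv, hΦ'.deriv, hRρ s (uIcc_of_le hab ▸ hs')]
    ring
  have hint : ∫ s in a..b, (g s - k s * ρ s) * Φ s ≤ 0 := by
    rw [intervalIntegral.integral_of_le hab]
    refine integral_nonpos_of_ae ?_
    filter_upwards [ae_restrict_of_ae hgk, ae_restrict_mem measurableSet_Ioc] with s hgs hs
    exact mul_nonpos_of_nonpos_of_nonneg (sub_nonpos.2 (hgs (Ioc_subset_Icc_self hs)))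
      (Real.exp_pos _).le
  have hparts := hR.integral_deriv_mul_eq_sub hΦ
  rw [intervalIntegral.integral_congr_ae hderiv] at hparts
  have hΦa : Φ a = 1 := by simp [Φ]
  have hΦb : Φ b = (Real.exp (∫ s in a..b, k s))⁻¹ := by simp [Φ, Real.exp_neg]
  rw [hΦa, hΦb, hRρ a (left_mem_Icc.2 hab), hRρ b (right_mem_Icc.2 hab)] at hparts
  rw [← mul_inv_le_iff₀ (Real.exp_pos _)]
  linarith

theorem backward_gronwall_log_envelope_general
    (c₁ c C₁ n : ℝ) (hc : 0 ≤ c)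
    (T : ℝ) (hT : T < 0)
    (a g ρ : ℝ → ℝ)
    (ha_int : IntervalIntegrable a volume T 0)
    (ha_bound : ∀ t ∈ Icc T 0,
      (∫ s in t..(0:ℝ), a s) ≤ C₁ * |t| + n * (1 + Real.log (1 + |t|)))
    (hρ_nonneg : ∀ t ∈ Icc T 0, 0 ≤ ρ t)
    (hg_int : IntervalIntegrable g volume T 0)
    (hρ_ac : ∀ t ∈ Icc T 0, ρ t = ρ T + ∫ s in T..t, g s)
    (hg_bound : ∀ᵐ s ∂(volume : Measure ℝ),
      s ∈ Icc T 0 → g s ≤ (-c₁ + c * a s) * ρ s) :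
    ρ 0 ≤ ρ T * Real.exp (c * n) * (1 + |T|) ^ (c * n) *
      Real.exp (-(c₁ - c * C₁) * |T|) := by
  have hT_mem : T ∈ Icc T 0 := left_mem_Icc.2 hT.le
  have hgronwall := le_mul_exp_integral_of_eq_add_integral hT.le
    (intervalIntegrable_const.add (ha_int.const_mul c)) hg_int hρ_ac hg_bound
  have hexponent : ∫ s in T..0, (-c₁ + c * a s)
      = -c₁ * |T| + c * ∫ s in T..0, a s := by
    rw [intervalIntegral.integral_add intervalIntegrable_const (ha_int.const_mul c),
      intervalIntegral.integral_const, intervalIntegral.integral_const_mul, abs_of_neg hT, smul_eq_mul]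
    ring
  have henvelope : Real.exp (∫ s in T..0, (-c₁ + c * a s))
      ≤ Real.exp (c * n) * (1 + |T|) ^ (c * n) * Real.exp (-(c₁ - c * C₁) * |T|) := by
    rw [Real.rpow_def_of_pos (by positivity), ← Real.exp_add, ← Real.exp_add, Real.exp_le_exp,
      hexponent]
    nlinarith [mul_le_mul_of_nonneg_left (ha_bound T hT_mem) hc]
  calc ρ 0 ≤ ρ T * Real.exp (∫ s in T..0, (-c₁ + c * a s)) := hgronwall
    _ ≤ ρ T * (Real.exp (c * n) * (1 + |T|) ^ (c * n) * Real.exp (-(c₁ - c * C₁) * |T|)) :=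
      mul_le_mul_of_nonneg_left henvelope (hρ_nonneg T hT_mem)
    _ = _ := by ring

/-- Backward Gronwall estimate with logarithmic envelope (quantitative core of
Lemma 11.1, part 2). The domain is `[T,0]` with `T < 0`. Absolute continuity of
`ρ` with `ρ' ≤ (-c₁ + c·a) ρ` a.e. is expressed in integral form:
`ρ t = ρ T + ∫_T^t g` with `g s ≤ (-c₁ + c·a s) ρ s` for a.e. `s ∈ [T,0]`. -/
theorem backward_gronwall_log_envelope
    (c₁ c C₁ n : ℝ) (hc₁ : 0 ≤ c₁) (hc : 0 ≤ c) (hC₁ : 0 ≤ C₁) (hn : 0 ≤ n)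
    (T : ℝ) (hT : T < 0)
    (a g ρ : ℝ → ℝ)
    (ha_nonneg : ∀ t ∈ Icc T 0, 0 ≤ a t)
    (ha_int : IntervalIntegrable a volume T 0)
    (ha_bound : ∀ t ∈ Icc T 0,
      (∫ s in t..(0:ℝ), a s) ≤ C₁ * |t| + n * (1 + Real.log (1 + |t|)))
    (hρ_nonneg : ∀ t ∈ Icc T 0, 0 ≤ ρ t)
    (hg_int : IntervalIntegrable g volume T 0)
    (hρ_ac : ∀ t ∈ Icc T 0, ρ t = ρ T + ∫ s in T..t, g s)
    (hg_bound : ∀ᵐ s ∂(volume : Measure ℝ),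
      s ∈ Icc T 0 → g s ≤ (-c₁ + c * a s) * ρ s) :
    ρ 0 ≤ ρ T * Real.exp (c * n) * (1 + |T|) ^ (c * n) *
      Real.exp (-(c₁ - c * C₁) * |T|) :=
  backward_gronwall_log_envelope_general c₁ c C₁ n hc T hT a g ρ ha_int ha_bound hρ_nonneg hg_int
    hρ_ac hg_bound
end

section
/- Propagation of equivalence through an initial-condition-insensitive kernel (the measure-theoretic core of Lemma 8.5): Let X, Y, Z be measurable spaces and m a σ-finite measure on X. Let R : X × Y → Measure(Z) be a measurable kernel such that for every x ∈ X and every y, y′ ∈ Y the measures R(x,y) and R(x,y′) are mutually absolutely continuous. For i = 1, 2 let μ_i be a finite measure on X × Y whose marginal on the first coordinate is mutually absolutely continuous with m, and set ν_i(A) = ∫_{X×Y} R(x,y)(A) dμ_i(x,y) for measurable A ⊆ Z. Then ν₁ and ν₂ are mutually absolutely continuous. -/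
/-!
Fix `y₀ : Y`. Since `R (x, y)` and `R (x, y₀)` are equivalent, the measure `R ∘ₘ μ` is equivalent
to `R (·, y₀) ∘ₘ μ`, and the latter equals `R (·, y₀) ∘ₘ μ.map Prod.fst`. Composition with a
fixed kernel preserves absolute continuity, so `R ∘ₘ μ` depends, up to equivalence, only on the
equivalence class of the first marginal of `μ`, which is that of `m` for both `μ₁` and `μ₂`.
-/

open MeasureTheory ProbabilityTheory

section

variable {X Y Z : Type*} [MeasurableSpace X] [MeasurableSpace Y] [MeasurableSpace Z]

lemma ProbabilityTheory.Kernel.prodMkRight_comp_eq_comp_map_fst (κ : Kernel X Z)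
    (μ : Measure (X × Y)) : κ.prodMkRight Y ∘ₘ μ = κ ∘ₘ μ.map Prod.fst := by
  ext s hs
  rw [Measure.bind_apply hs (by fun_prop), Measure.bind_apply hs (by fun_prop),
    MeasureTheory.lintegral_map (κ.measurable_coe hs) measurable_fst]
  rfl

lemma MeasureTheory.Measure.AbsolutelyContinuous.comp_right_of_map_fst {μ ν : Measure (X × Y)}
    (h : μ.map Prod.fst ≪ ν.map Prod.fst) {R : Kernel (X × Y) Z}
    (hR : ∀ (x : X) (y y' : Y), R (x, y) ≪ R (x, y')) :
    R ∘ₘ μ ≪ R ∘ₘ ν := by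
  rcases isEmpty_or_nonempty Y with _ | ⟨⟨y₀⟩⟩
  · simp [Subsingleton.elim μ 0]
  have hμ : R ∘ₘ μ ≪ R.sectL y₀ ∘ₘ μ.map Prod.fst := by
    rw [← Kernel.prodMkRight_comp_eq_comp_map_fst]
    exact .comp_left μ (ae_of_all _ fun p ↦ hR p.1 p.2 y₀)
  have hν : R.sectL y₀ ∘ₘ ν.map Prod.fst ≪ R ∘ₘ ν := by
    rw [← Kernel.prodMkRight_comp_eq_comp_map_fst]
    exact .comp_left ν (ae_of_all _ fun p ↦ hR p.1 y₀ p.2)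
  exact hμ.trans ((h.comp_right _).trans hν)

end

theorem kernel_propagates_equivalence_general
    {X Y Z : Type*} [MeasurableSpace X] [MeasurableSpace Y] [MeasurableSpace Z]
    (m : Measure X)
    (R : Kernel (X × Y) Z)
    (hR : ∀ (x : X) (y y' : Y), R (x, y) ≪ R (x, y'))
    (μ₁ μ₂ : Measure (X × Y))
    (h₁ : μ₁.map Prod.fst ≪ m ∧ m ≪ μ₁.map Prod.fst)
    (h₂ : μ₂.map Prod.fst ≪ m ∧ m ≪ μ₂.map Prod.fst) :
    μ₁.bind (fun p => R p) ≪ μ₂.bind (fun p => R p) ∧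
    μ₂.bind (fun p => R p) ≪ μ₁.bind (fun p => R p) :=
  ⟨(h₁.1.trans h₂.2).comp_right_of_map_fst hR, (h₂.1.trans h₁.2).comp_right_of_map_fst hR⟩

/-- Propagation of equivalence through an initial-condition-insensitive kernel
(the measure-theoretic core of Lemma 8.5): if `R : X × Y → Measure Z` is a
measurable kernel with `R(x,y)` equivalent to `R(x,y')` for all `x, y, y'`, and
`μ₁, μ₂` are finite measures on `X × Y` whose first marginals are both
equivalent to a σ-finite measure `m`, then the measures
`νᵢ = ∫ R(x,y) dμᵢ(x,y)` are mutually absolutely continuous. -/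
theorem kernel_propagates_equivalence
    {X Y Z : Type*} [MeasurableSpace X] [MeasurableSpace Y] [MeasurableSpace Z]
    (m : Measure X) [SigmaFinite m]
    (R : Kernel (X × Y) Z)
    (hR : ∀ (x : X) (y y' : Y), R (x, y) ≪ R (x, y'))
    (μ₁ μ₂ : Measure (X × Y)) [IsFiniteMeasure μ₁] [IsFiniteMeasure μ₂]
    (h₁ : μ₁.map Prod.fst ≪ m ∧ m ≪ μ₁.map Prod.fst)
    (h₂ : μ₂.map Prod.fst ≪ m ∧ m ≪ μ₂.map Prod.fst) :
    μ₁.bind (fun p => R p) ≪ μ₂.bind (fun p => R p) ∧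
    μ₂.bind (fun p => R p) ≪ μ₁.bind (fun p => R p) :=
  kernel_propagates_equivalence_general m R hR μ₁ μ₂ h₁ h₂
end
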